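/- For every λμ-term t, the composite translation (t†)∘ (first translating λμ to λ̄μμ̃ via (·)†, then back via (·)∘) reduces to t by zero or more linear λμ-reduction steps; the analogous statement holds for λμ-commands and λμ-contexts. -/

import Mathlib

set_option autoImplicit true

namespace CHSim

/-- Lift a de Bruijn renaming under a binder. -/
def upr (ξ : ℕ → ℕ) : ℕ → ℕ
  | 0 => 0
  | k+1 => ξ k + 1

/-! ## The λμ-calculus (de Bruijn representation).

λ-variables and μ-variables each have their own name space of de Bruijn
indices.  `abs t` is `λx.t` (binding λ-index 0) and `mabs c` is `μα.c`
(binding μ-index 0); `cmd a t` is the command `[a]t`. -/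

mutual
  inductive Tm : Type
    | var : ℕ → Tm
    | abs : Tm → Tm
    | app : Tm → Tm → Tm
    | mabs : Cm → Tm
  inductive Cm : Type
    | cmd : ℕ → Tm → Cm
end

/-- λμ-contexts `e ::= ⟨α⟩ | ⟨β⟩(t ·) | e · t`. -/
inductive Ct : Type
  | cvar : ℕ → Ct
  | push : ℕ → Tm → Ct
  | cons : Ct → Tm → Ct

/-- Filling a λμ-context with a term: `⟨α⟩⟨t⟩ = [α]t`,
`(⟨β⟩(u ·))⟨t⟩ = [β](u t)`, `(h · u)⟨t⟩ = h⟨t u⟩`. -/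
def fill : Ct → Tm → Cm
  | .cvar a, t => .cmd a t
  | .push b u, t => .cmd b (.app u t)
  | .cons h u, t => fill h (.app t u)

mutual
  /-- Renaming of λ-variables in λμ-terms. -/
  def renLT (ξ : ℕ → ℕ) : Tm → Tm
    | .var x => .var (ξ x)
    | .abs t => .abs (renLT (upr ξ) t)
    | .app t u => .app (renLT ξ t) (renLT ξ u)
    | .mabs c => .mabs (renLC ξ c)
  /-- Renaming of λ-variables in λμ-commands. -/
  def renLC (ξ : ℕ → ℕ) : Cm → Cm
    | .cmd a t => .cmd a (renLT ξ t)
end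

mutual
  /-- Renaming of μ-variables in λμ-terms. -/
  def renMT (ξ : ℕ → ℕ) : Tm → Tm
    | .var x => .var x
    | .abs t => .abs (renMT ξ t)
    | .app t u => .app (renMT ξ t) (renMT ξ u)
    | .mabs c => .mabs (renMC (upr ξ) c)
  /-- Renaming of μ-variables in λμ-commands. -/
  def renMC (ξ : ℕ → ℕ) : Cm → Cm
    | .cmd a t => .cmd (ξ a) (renMT ξ t)
end

/-- Renaming of λ-variables in λμ-contexts. -/
def renLE (ξ : ℕ → ℕ) : Ct → Ct
  | .cvar a => .cvar a
  | .push b t => .push b (renLT ξ t)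
  | .cons e t => .cons (renLE ξ e) (renLT ξ t)

/-- Renaming of μ-variables in λμ-contexts. -/
def renME (ξ : ℕ → ℕ) : Ct → Ct
  | .cvar a => .cvar (ξ a)
  | .push b t => .push (ξ b) (renMT ξ t)
  | .cons e t => .cons (renME ξ e) (renMT ξ t)

/-- Lifting a λ-substitution under a λ-binder. -/
def upsL (σ : ℕ → Tm) : ℕ → Tm
  | 0 => .var 0
  | k+1 => renLT Nat.succ (σ k)

mutual
  /-- (Capture-avoiding) substitution for λ-variables in λμ-terms. -/
  def lsubT (σ : ℕ → Tm) : Tm → Tm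
    | .var x => σ x
    | .abs t => .abs (lsubT (upsL σ) t)
    | .app t u => .app (lsubT σ t) (lsubT σ u)
    | .mabs c => .mabs (lsubC (fun k => renMT Nat.succ (σ k)) c)
  /-- Substitution for λ-variables in λμ-commands. -/
  def lsubC (σ : ℕ → Tm) : Cm → Cm
    | .cmd a t => .cmd a (lsubT σ t)
end

/-- Substitution for λ-variables in λμ-contexts. -/
def lsubE (σ : ℕ → Tm) : Ct → Ct
  | .cvar a => .cvar a
  | .push b t => .push b (lsubT σ t)
  | .cons e t => .cons (lsubE σ e) (lsubT σ t)

/-- The substitution replacing the λ-variable `x` by `u`. -/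
def sub1L (x : ℕ) (u : Tm) : ℕ → Tm := fun k => if k = x then u else .var k

/-- The β-substitution replacing the bound λ-variable 0 by `u`. -/
def sub0L (u : Tm) : ℕ → Tm
  | 0 => u
  | k+1 => .var k

/-- Lifting a structural (μ-)substitution under a μ-binder. -/
def upsM (σ : ℕ → Ct) : ℕ → Ct
  | 0 => .cvar 0
  | k+1 => renME Nat.succ (σ k)

mutual
  /-- Structural substitution of λμ-contexts for μ-variables in λμ-terms:
  every subcommand `[α]u` is replaced by `(σ α)⟨u[σ]⟩`. -/
  def msubT (σ : ℕ → Ct) : Tm → Tm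
    | .var x => .var x
    | .abs t => .abs (msubT (fun k => renLE Nat.succ (σ k)) t)
    | .app t u => .app (msubT σ t) (msubT σ u)
    | .mabs c => .mabs (msubC (upsM σ) c)
  /-- Structural substitution in λμ-commands. -/
  def msubC (σ : ℕ → Ct) : Cm → Cm
    | .cmd a t => fill (σ a) (msubT σ t)
end

/-- Structural substitution in λμ-contexts (the head variable of
`⟨β⟩(t ·)` is, by the freshness convention of the translations,
never the substituted variable, so it is left untouched). -/
def msubE (σ : ℕ → Ct) : Ct → Ct
  | .cvar a => σ a
  | .push b t => .push b (msubT σ t)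
  | .cons e t => .cons (msubE σ e) (msubT σ t)

/-- The structural substitution replacing the μ-variable `a` by the context `e`. -/
def sub1M (a : ℕ) (e : Ct) : ℕ → Ct := fun k => if k = a then e else .cvar k

/-- The structural substitution replacing the bound μ-variable 0 by the
context `e` (removing the binder). -/
def sub0M (e : Ct) : ℕ → Ct
  | 0 => e
  | k+1 => .cvar k

mutual
  /-- Number of free occurrences of the λ-variable `x` in a λμ-term. -/
  def cntLT (x : ℕ) : Tm → ℕ
    | .var y => if y = x then 1 else 0
    | .abs t => cntLT (x+1) t
    | .app t u => cntLT x t + cntLT x u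
    | .mabs c => cntLC x c
  /-- Number of free occurrences of the λ-variable `x` in a λμ-command. -/
  def cntLC (x : ℕ) : Cm → ℕ
    | .cmd _ t => cntLT x t
end

/-- λμ-values `v ::= x | λx.t`. -/
inductive IsVal : Tm → Prop
  | var (x : ℕ) : IsVal (.var x)
  | abs (t : Tm) : IsVal (.abs t)

/-! ### Reduction in λμ: congruence closure of root rules -/

mutual
  /-- Congruence (compatible) closure of root relations, term level. -/
  inductive KT (R1 : Tm → Tm → Prop) (R2 : Cm → Cm → Prop) : Tm → Tm → Prop
    | root {t t'} : R1 t t' → KT R1 R2 t t'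
    | absC {t t'} : KT R1 R2 t t' → KT R1 R2 (.abs t) (.abs t')
    | appL {t t'} (u) : KT R1 R2 t t' → KT R1 R2 (.app t u) (.app t' u)
    | appR (t) {u u'} : KT R1 R2 u u' → KT R1 R2 (.app t u) (.app t u')
    | mabsC {c c'} : KC R1 R2 c c' → KT R1 R2 (.mabs c) (.mabs c')
  /-- Congruence (compatible) closure of root relations, command level. -/
  inductive KC (R1 : Tm → Tm → Prop) (R2 : Cm → Cm → Prop) : Cm → Cm → Prop
    | root {c c'} : R2 c c' → KC R1 R2 c c'
    | cmdC (a) {t t'} : KT R1 R2 t t' → KC R1 R2 (.cmd a t) (.cmd a t')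
end

/-- Term-level root rules of the undirected λμ-calculus: β, μ, μ', θ. -/
inductive RootT : Tm → Tm → Prop
  | beta (u t : Tm) : RootT (.app (.abs u) t) (lsubT (sub0L t) u)
  | mu (c : Cm) (t : Tm) : RootT (.app (.mabs c) t)
      (.mabs (msubC (sub1M 0 (.cons (.cvar 0) (renMT Nat.succ t))) c))
  | mu' (t : Tm) (c : Cm) : RootT (.app t (.mabs c))
      (.mabs (msubC (sub1M 0 (.push 0 (renMT Nat.succ t))) c))
  | theta (t : Tm) : RootT (.mabs (.cmd 0 (renMT Nat.succ t))) t

/-- Command-level root rule of the λμ-calculus: ρ. -/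
inductive RootC : Cm → Cm → Prop
  | rho (b : ℕ) (c : Cm) : RootC (.cmd b (.mabs c)) (msubC (sub0M (.cvar b)) c)

/-- Term-level *linear* root rules of the λμ-calculus: θ, and β when the
argument is a variable or the bound variable occurs exactly once. -/
inductive RootTlin : Tm → Tm → Prop
  | beta (u t : Tm) : ((∃ y, t = Tm.var y) ∨ cntLT 0 u = 1) →
      RootTlin (.app (.abs u) t) (lsubT (sub0L t) u)
  | theta (t : Tm) : RootTlin (.mabs (.cmd 0 (renMT Nat.succ t))) t

/-- Term-level root rules of call-by-name λμ: β, μ, θ (no μ'). -/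
inductive RootTn : Tm → Tm → Prop
  | beta (u t : Tm) : RootTn (.app (.abs u) t) (lsubT (sub0L t) u)
  | mu (c : Cm) (t : Tm) : RootTn (.app (.mabs c) t)
      (.mabs (msubC (sub1M 0 (.cons (.cvar 0) (renMT Nat.succ t))) c))
  | theta (t : Tm) : RootTn (.mabs (.cmd 0 (renMT Nat.succ t))) t

/-- Term-level root rules of call-by-value λμ: βv, μv, μ', θ. -/
inductive RootTv : Tm → Tm → Prop
  | betav (u t : Tm) : IsVal t → RootTv (.app (.abs u) t) (lsubT (sub0L t) u)
  | muv (c : Cm) (t : Tm) : IsVal t → RootTv (.app (.mabs c) t)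
      (.mabs (msubC (sub1M 0 (.cons (.cvar 0) (renMT Nat.succ t))) c))
  | mu' (t : Tm) (c : Cm) : RootTv (.app t (.mabs c))
      (.mabs (msubC (sub1M 0 (.push 0 (renMT Nat.succ t))) c))
  | theta (t : Tm) : RootTv (.mabs (.cmd 0 (renMT Nat.succ t))) t

/-- Term-level *linear call-by-value* root rules of λμ. -/
inductive RootTvlin : Tm → Tm → Prop
  | betav (u t : Tm) : IsVal t → ((∃ y, t = Tm.var y) ∨ cntLT 0 u = 1) →
      RootTvlin (.app (.abs u) t) (lsubT (sub0L t) u)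
  | theta (t : Tm) : RootTvlin (.mabs (.cmd 0 (renMT Nat.succ t))) t

/-- One-step λμ-reduction (β, μ, μ', ρ, θ), terms. -/
abbrev StepT := KT RootT RootC
/-- One-step λμ-reduction (β, μ, μ', ρ, θ), commands. -/
abbrev StepC := KC RootT RootC
/-- One-step linear λμ-reduction, terms. -/
abbrev LStepT := KT RootTlin RootC
/-- One-step linear λμ-reduction, commands. -/
abbrev LStepC := KC RootTlin RootC
/-- One-step call-by-name λμ-reduction, terms. -/
abbrev StepNT := KT RootTn RootC
/-- One-step call-by-name λμ-reduction, commands. -/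
abbrev StepNC := KC RootTn RootC
/-- One-step call-by-value λμ-reduction, terms. -/
abbrev StepVT := KT RootTv RootC
/-- One-step call-by-value λμ-reduction, commands. -/
abbrev StepVC := KC RootTv RootC
/-- One-step linear call-by-value λμ-reduction, terms. -/
abbrev LStepVT := KT RootTvlin RootC
/-- One-step linear call-by-value λμ-reduction, commands. -/
abbrev LStepVC := KC RootTvlin RootC

/-- Reflexive-transitive closure. -/
abbrev Star {α : Type} (r : α → α → Prop) : α → α → Prop := Relation.ReflTransGen r

/-! ## The λ̄μμ̃-calculus (de Bruijn representation). -/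

mutual
  inductive BTm : Type
    | var : ℕ → BTm
    | abs : BTm → BTm
    | mabs : BCm → BTm
  inductive BCm : Type
    | cut : BTm → BCt → BCm
  inductive BCt : Type
    | cvar : ℕ → BCt
    | cons : BTm → BCt → BCt
    | tmu : BCm → BCt
end

mutual
  /-- Renaming of λ-variables in λ̄μμ̃-terms. -/
  def brenLT (ξ : ℕ → ℕ) : BTm → BTm
    | .var x => .var (ξ x)
    | .abs t => .abs (brenLT (upr ξ) t)
    | .mabs c => .mabs (brenLC ξ c)
  def brenLC (ξ : ℕ → ℕ) : BCm → BCm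
    | .cut t e => .cut (brenLT ξ t) (brenLE ξ e)
  def brenLE (ξ : ℕ → ℕ) : BCt → BCt
    | .cvar a => .cvar a
    | .cons t e => .cons (brenLT ξ t) (brenLE ξ e)
    | .tmu c => .tmu (brenLC (upr ξ) c)
end

mutual
  /-- Renaming of μ-variables in λ̄μμ̃-terms. -/
  def brenMT (ξ : ℕ → ℕ) : BTm → BTm
    | .var x => .var x
    | .abs t => .abs (brenMT ξ t)
    | .mabs c => .mabs (brenMC (upr ξ) c)
  def brenMC (ξ : ℕ → ℕ) : BCm → BCm
    | .cut t e => .cut (brenMT ξ t) (brenME ξ e)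
  def brenME (ξ : ℕ → ℕ) : BCt → BCt
    | .cvar a => .cvar (ξ a)
    | .cons t e => .cons (brenMT ξ t) (brenME ξ e)
    | .tmu c => .tmu (brenMC ξ c)
end

def bupsL (σ : ℕ → BTm) : ℕ → BTm
  | 0 => .var 0
  | k+1 => brenLT Nat.succ (σ k)

mutual
  /-- Substitution for λ-variables in λ̄μμ̃-terms. -/
  def blsubT (σ : ℕ → BTm) : BTm → BTm
    | .var x => σ x
    | .abs t => .abs (blsubT (bupsL σ) t)
    | .mabs c => .mabs (blsubC (fun k => brenMT Nat.succ (σ k)) c)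
  def blsubC (σ : ℕ → BTm) : BCm → BCm
    | .cut t e => .cut (blsubT σ t) (blsubE σ e)
  def blsubE (σ : ℕ → BTm) : BCt → BCt
    | .cvar a => .cvar a
    | .cons t e => .cons (blsubT σ t) (blsubE σ e)
    | .tmu c => .tmu (blsubC (bupsL σ) c)
end

def bsub1L (x : ℕ) (u : BTm) : ℕ → BTm := fun k => if k = x then u else .var k

def bsub0L (u : BTm) : ℕ → BTm
  | 0 => u
  | k+1 => .var k

def bupsM (σ : ℕ → BCt) : ℕ → BCt
  | 0 => .cvar 0
  | k+1 => brenME Nat.succ (σ k)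

mutual
  /-- Structural substitution of contexts for μ-variables in λ̄μμ̃-terms. -/
  def bmsubT (σ : ℕ → BCt) : BTm → BTm
    | .var x => .var x
    | .abs t => .abs (bmsubT (fun k => brenLE Nat.succ (σ k)) t)
    | .mabs c => .mabs (bmsubC (bupsM σ) c)
  def bmsubC (σ : ℕ → BCt) : BCm → BCm
    | .cut t e => .cut (bmsubT σ t) (bmsubE σ e)
  def bmsubE (σ : ℕ → BCt) : BCt → BCt
    | .cvar a => σ a
    | .cons t e => .cons (bmsubT σ t) (bmsubE σ e)
    | .tmu c => .tmu (bmsubC (fun k => brenLE Nat.succ (σ k)) c)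
end

def bsub1M (a : ℕ) (e : BCt) : ℕ → BCt := fun k => if k = a then e else .cvar k

def bsub0M (e : BCt) : ℕ → BCt
  | 0 => e
  | k+1 => .cvar k

mutual
  /-- Number of free occurrences of the λ-variable `x` in a λ̄μμ̃-term. -/
  def bcntLT (x : ℕ) : BTm → ℕ
    | .var y => if y = x then 1 else 0
    | .abs t => bcntLT (x+1) t
    | .mabs c => bcntLC x c
  def bcntLC (x : ℕ) : BCm → ℕ
    | .cut t e => bcntLT x t + bcntLE x e
  def bcntLE (x : ℕ) : BCt → ℕ
    | .cvar _ => 0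
    | .cons t e => bcntLT x t + bcntLE x e
    | .tmu c => bcntLC (x+1) c
end

mutual
  /-- Number of free occurrences of the μ-variable `a` in a λ̄μμ̃-term. -/
  def bcntMT (a : ℕ) : BTm → ℕ
    | .var _ => 0
    | .abs t => bcntMT a t
    | .mabs c => bcntMC (a+1) c
  def bcntMC (a : ℕ) : BCm → ℕ
    | .cut t e => bcntMT a t + bcntME a e
  def bcntME (a : ℕ) : BCt → ℕ
    | .cvar b => if b = a then 1 else 0
    | .cons t e => bcntMT a t + bcntME a e
    | .tmu c => bcntMC a c
end

/-- λ̄μμ̃-values `v ::= x | λx.t`. -/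
inductive BIsVal : BTm → Prop
  | var (x : ℕ) : BIsVal (.var x)
  | abs (t : BTm) : BIsVal (.abs t)

/-- Stacks (the contexts of λ̄μμ̃_T): `s ::= α | t · s`. -/
inductive IsStk : BCt → Prop
  | cvar (a : ℕ) : IsStk (.cvar a)
  | cons (t : BTm) {s : BCt} : IsStk s → IsStk (.cons t s)

/-! ### Reduction in λ̄μμ̃: congruence closure of root rules -/

mutual
  inductive JT (R1 : BTm → BTm → Prop) (R2 : BCm → BCm → Prop) : BTm → BTm → Prop
    | root {t t'} : R1 t t' → JT R1 R2 t t'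
    | absC {t t'} : JT R1 R2 t t' → JT R1 R2 (.abs t) (.abs t')
    | mabsC {c c'} : JC R1 R2 c c' → JT R1 R2 (.mabs c) (.mabs c')
  inductive JC (R1 : BTm → BTm → Prop) (R2 : BCm → BCm → Prop) : BCm → BCm → Prop
    | root {c c'} : R2 c c' → JC R1 R2 c c'
    | cutL {t t'} (e) : JT R1 R2 t t' → JC R1 R2 (.cut t e) (.cut t' e)
    | cutR (t) {e e'} : JE R1 R2 e e' → JC R1 R2 (.cut t e) (.cut t e')
  inductive JE (R1 : BTm → BTm → Prop) (R2 : BCm → BCm → Prop) : BCt → BCt → Prop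
    | consL {t t'} (e) : JT R1 R2 t t' → JE R1 R2 (.cons t e) (.cons t' e)
    | consR (t) {e e'} : JE R1 R2 e e' → JE R1 R2 (.cons t e) (.cons t e')
    | tmuC {c c'} : JC R1 R2 c c' → JE R1 R2 (.tmu c) (.tmu c')
end

/-- The term-level root rule of λ̄μμ̃: θ (shared by all evaluation disciplines). -/
inductive BRootT : BTm → BTm → Prop
  | theta (t : BTm) : BRootT (.mabs (.cut (brenMT Nat.succ t) (.cvar 0))) t

/-- Command-level root rules of the undirected λ̄μμ̃-calculus: β, μ, μ̃. -/
inductive BRootC : BCm → BCm → Prop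
  | beta (u t : BTm) (e : BCt) :
      BRootC (.cut (.abs u) (.cons t e)) (.cut t (.tmu (.cut u (brenLE Nat.succ e))))
  | mu (c : BCm) (e : BCt) : BRootC (.cut (.mabs c) e) (bmsubC (bsub0M e) c)
  | mutilde (t : BTm) (c : BCm) : BRootC (.cut t (.tmu c)) (blsubC (bsub0L t) c)

/-- Command-level *linear* root rules of λ̄μμ̃: β always; μ (resp. μ̃) when the
substituted context (resp. term) is a variable or the bound variable occurs
exactly once in the command. -/
inductive BRootClin : BCm → BCm → Prop
  | beta (u t : BTm) (e : BCt) :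
      BRootClin (.cut (.abs u) (.cons t e)) (.cut t (.tmu (.cut u (brenLE Nat.succ e))))
  | mu (c : BCm) (e : BCt) : ((∃ a, e = BCt.cvar a) ∨ bcntMC 0 c = 1) →
      BRootClin (.cut (.mabs c) e) (bmsubC (bsub0M e) c)
  | mutilde (t : BTm) (c : BCm) : ((∃ x, t = BTm.var x) ∨ bcntLC 0 c = 1) →
      BRootClin (.cut t (.tmu c)) (blsubC (bsub0L t) c)

/-- Command-level root rules of call-by-name λ̄μμ̃ (λ̄μμ̃_T): β, μₙ (stacks), μ̃. -/
inductive BRootCn : BCm → BCm → Prop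
  | beta (u t : BTm) (e : BCt) :
      BRootCn (.cut (.abs u) (.cons t e)) (.cut t (.tmu (.cut u (brenLE Nat.succ e))))
  | mun (c : BCm) (s : BCt) : IsStk s → BRootCn (.cut (.mabs c) s) (bmsubC (bsub0M s) c)
  | mutilde (t : BTm) (c : BCm) : BRootCn (.cut t (.tmu c)) (blsubC (bsub0L t) c)

/-- Command-level *linear call-by-name* root rules of λ̄μμ̃. -/
inductive BRootCnlin : BCm → BCm → Prop
  | beta (u t : BTm) (e : BCt) :
      BRootCnlin (.cut (.abs u) (.cons t e)) (.cut t (.tmu (.cut u (brenLE Nat.succ e))))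
  | mun (c : BCm) (s : BCt) : IsStk s → ((∃ a, s = BCt.cvar a) ∨ bcntMC 0 c = 1) →
      BRootCnlin (.cut (.mabs c) s) (bmsubC (bsub0M s) c)
  | mutilde (t : BTm) (c : BCm) : ((∃ x, t = BTm.var x) ∨ bcntLC 0 c = 1) →
      BRootCnlin (.cut t (.tmu c)) (blsubC (bsub0L t) c)

/-- Command-level root rules of call-by-value λ̄μμ̃ (λ̄μμ̃_Q): β, μ, μ̃ᵥ (values). -/
inductive BRootCv : BCm → BCm → Prop
  | beta (u t : BTm) (e : BCt) :
      BRootCv (.cut (.abs u) (.cons t e)) (.cut t (.tmu (.cut u (brenLE Nat.succ e))))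
  | mu (c : BCm) (e : BCt) : BRootCv (.cut (.mabs c) e) (bmsubC (bsub0M e) c)
  | mutildev (v : BTm) (c : BCm) : BIsVal v →
      BRootCv (.cut v (.tmu c)) (blsubC (bsub0L v) c)

/-- Command-level *linear call-by-value* root rules of λ̄μμ̃. -/
inductive BRootCvlin : BCm → BCm → Prop
  | beta (u t : BTm) (e : BCt) :
      BRootCvlin (.cut (.abs u) (.cons t e)) (.cut t (.tmu (.cut u (brenLE Nat.succ e))))
  | mu (c : BCm) (e : BCt) : ((∃ a, e = BCt.cvar a) ∨ bcntMC 0 c = 1) →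
      BRootCvlin (.cut (.mabs c) e) (bmsubC (bsub0M e) c)
  | mutildev (v : BTm) (c : BCm) : BIsVal v → ((∃ x, v = BTm.var x) ∨ bcntLC 0 c = 1) →
      BRootCvlin (.cut v (.tmu c)) (blsubC (bsub0L v) c)

/-- Command-level root rules with β' instead of β: β', μ, μ̃. -/
inductive BRootCp : BCm → BCm → Prop
  | beta' (u t : BTm) (e : BCt) :
      BRootCp (.cut (.abs u) (.cons t e)) (.cut (blsubT (bsub0L t) u) e)
  | mu (c : BCm) (e : BCt) : BRootCp (.cut (.mabs c) e) (bmsubC (bsub0M e) c)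
  | mutilde (t : BTm) (c : BCm) : BRootCp (.cut t (.tmu c)) (blsubC (bsub0L t) c)

/-- Command-level call-by-name root rules with β': β', μₙ, μ̃. -/
inductive BRootCnp : BCm → BCm → Prop
  | beta' (u t : BTm) (e : BCt) :
      BRootCnp (.cut (.abs u) (.cons t e)) (.cut (blsubT (bsub0L t) u) e)
  | mun (c : BCm) (s : BCt) : IsStk s → BRootCnp (.cut (.mabs c) s) (bmsubC (bsub0M s) c)
  | mutilde (t : BTm) (c : BCm) : BRootCnp (.cut t (.tmu c)) (blsubC (bsub0L t) c)

/-- Command-level call-by-value root rules with β': β' (values), μ, μ̃ᵥ. -/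
inductive BRootCvp : BCm → BCm → Prop
  | beta' (u v : BTm) (e : BCt) : BIsVal v →
      BRootCvp (.cut (.abs u) (.cons v e)) (.cut (blsubT (bsub0L v) u) e)
  | mu (c : BCm) (e : BCt) : BRootCvp (.cut (.mabs c) e) (bmsubC (bsub0M e) c)
  | mutildev (v : BTm) (c : BCm) : BIsVal v →
      BRootCvp (.cut v (.tmu c)) (blsubC (bsub0L v) c)

/-- One-step λ̄μμ̃-reduction (β, μ, μ̃, θ), terms. -/
abbrev BStepT := JT BRootT BRootC
abbrev BStepC := JC BRootT BRootC
abbrev BStepE := JE BRootT BRootC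
/-- One-step linear λ̄μμ̃-reduction. -/
abbrev LBStepT := JT BRootT BRootClin
abbrev LBStepC := JC BRootT BRootClin
abbrev LBStepE := JE BRootT BRootClin
/-- One-step call-by-name λ̄μμ̃-reduction. -/
abbrev BStepNT := JT BRootT BRootCn
abbrev BStepNC := JC BRootT BRootCn
abbrev BStepNE := JE BRootT BRootCn
/-- One-step linear call-by-name λ̄μμ̃-reduction. -/
abbrev LBStepNT := JT BRootT BRootCnlin
abbrev LBStepNC := JC BRootT BRootCnlin
/-- One-step call-by-value λ̄μμ̃-reduction. -/
abbrev BStepVT := JT BRootT BRootCv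
abbrev BStepVC := JC BRootT BRootCv
/-- One-step linear call-by-value λ̄μμ̃-reduction. -/
abbrev LBStepVT := JT BRootT BRootCvlin
abbrev LBStepVC := JC BRootT BRootCvlin
/-- One-step λ̄μμ̃-reduction with β' (β', μ, μ̃, θ). -/
abbrev BStepPT := JT BRootT BRootCp
abbrev BStepPC := JC BRootT BRootCp
/-- One-step call-by-name λ̄μμ̃-reduction with β'. -/
abbrev BStepNPT := JT BRootT BRootCnp
abbrev BStepNPC := JC BRootT BRootCnp
/-- One-step call-by-value λ̄μμ̃-reduction with β'. -/
abbrev BStepVPT := JT BRootT BRootCvp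
abbrev BStepVPC := JC BRootT BRootCvp

/-! ## The translation `(·)†` from λμ to λ̄μμ̃ -/

mutual
  /-- `x† = x`, `(λx.u)† = λx.u†`, `(u v)† = μβ.⟨v† | μ̃y.⟨u† | y·β⟩⟩`
  (`y`, `β` fresh, realized by de Bruijn lifting), `(μα.c)† = μα.c†`. -/
  def dagT : Tm → BTm
    | .var x => .var x
    | .abs t => .abs (dagT t)
    | .app u v => .mabs (.cut (brenMT Nat.succ (dagT v))
        (.tmu (.cut (brenLT Nat.succ (brenMT Nat.succ (dagT u)))
          (.cons (.var 0) (.cvar 0)))))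
    | .mabs c => .mabs (dagC c)
  /-- `([α]t)† = ⟨t† | α⟩`. -/
  def dagC : Cm → BCm
    | .cmd a t => .cut (dagT t) (.cvar a)
end

/-- `⟨α⟩† = α`, `(⟨β⟩(t ·))† = μ̃y.⟨t† | y·β⟩`, `(h · t)† = t† · h†`. -/
def dagE : Ct → BCt
  | .cvar a => .cvar a
  | .push b t => .tmu (.cut (brenLT Nat.succ (dagT t)) (.cons (.var 0) (.cvar b)))
  | .cons e t => .cons (dagT t) (dagE e)

/-! ## The translation `(·)∘` from λ̄μμ̃ to λμ -/

mutual
  /-- `x∘ = x`, `(λx.u)∘ = λx.u∘`, `(μα.c)∘ = μα.c∘`. -/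
  def circT : BTm → Tm
    | .var x => .var x
    | .abs t => .abs (circT t)
    | .mabs c => .mabs (circC c)
  /-- `⟨t | e⟩∘ = e∘⟨t∘⟩`. -/
  def circC : BCm → Cm
    | .cut t e => fill (circE e) (circT t)
  /-- `α∘ = ⟨α⟩`, `(t · h)∘ = h∘ · t∘`,
  `(μ̃x.c)∘ = ⟨β⟩((λx.μδ.c∘) ·)` with `δ ∉ c` (realized by lifting). -/
  def circE : BCt → Ct
    | .cvar a => .cvar a
    | .cons t e => .cons (circE e) (circT t)
    | .tmu c => .push 0 (.abs (.mabs (renMC Nat.succ (circC c))))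
end

/-! The administrative redex that `(·)†` introduces for an application `u v` (and for a context
`⟨β⟩(t ·)`) comes back under `(·)∘` as `[β]((λy.μδ.[β](u y)) v)`. It is undone by a β-step, linear
because `y` occurs once, a ρ-step and, for applications, a θ-step; everything else is the
commutation of `(·)∘` with renamings. -/

theorem upr_comp (ξ ζ : ℕ → ℕ) : (fun k => upr ξ (upr ζ k)) = upr (fun k => ξ (ζ k)) := by
  funext n; cases n <;> rfl

mutual
theorem renMT_renMT (ξ ζ : ℕ → ℕ) : ∀ t : Tm,
    renMT ξ (renMT ζ t) = renMT (fun k => ξ (ζ k)) t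
  | .var _ => rfl
  | .abs t => by simp only [renMT, renMT_renMT ξ ζ t]
  | .app t u => by simp only [renMT, renMT_renMT ξ ζ t, renMT_renMT ξ ζ u]
  | .mabs c => by simp only [renMT, renMC_renMC (upr ξ) (upr ζ) c, upr_comp]
theorem renMC_renMC (ξ ζ : ℕ → ℕ) : ∀ c : Cm,
    renMC ξ (renMC ζ c) = renMC (fun k => ξ (ζ k)) c
  | .cmd _ t => by simp only [renMC, renMT_renMT ξ ζ t]
end

theorem renMC_upr_renMC_succ (ξ : ℕ → ℕ) (c : Cm) :
    renMC (upr ξ) (renMC Nat.succ c) = renMC Nat.succ (renMC ξ c) := by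
  rw [renMC_renMC, renMC_renMC]; rfl

mutual
theorem renMT_renLT (ξ ζ : ℕ → ℕ) : ∀ t : Tm,
    renMT ξ (renLT ζ t) = renLT ζ (renMT ξ t)
  | .var _ => rfl
  | .abs t => by simp only [renMT, renLT, renMT_renLT ξ (upr ζ) t]
  | .app t u => by simp only [renMT, renLT, renMT_renLT ξ ζ t, renMT_renLT ξ ζ u]
  | .mabs c => by simp only [renMT, renLT, renMC_renLC (upr ξ) ζ c]
theorem renMC_renLC (ξ ζ : ℕ → ℕ) : ∀ c : Cm,
    renMC ξ (renLC ζ c) = renLC ζ (renMC ξ c)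
  | .cmd _ t => by simp only [renMC, renLC, renMT_renLT ξ ζ t]
end

theorem renLC_fill (ζ : ℕ → ℕ) : ∀ (e : Ct) (t : Tm),
    renLC ζ (fill e t) = fill (renLE ζ e) (renLT ζ t)
  | .cvar _, _ => rfl
  | .push _ _, _ => rfl
  | .cons e u, t => by simp only [fill, renLC_fill ζ e, renLE, renLT]

theorem renMC_fill (ξ : ℕ → ℕ) : ∀ (e : Ct) (t : Tm),
    renMC ξ (fill e t) = fill (renME ξ e) (renMT ξ t)
  | .cvar _, _ => rfl
  | .push _ _, _ => rfl
  | .cons e u, t => by simp only [fill, renMC_fill ξ e, renME, renMT]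

mutual
theorem circT_brenLT (ζ : ℕ → ℕ) : ∀ t : BTm, circT (brenLT ζ t) = renLT ζ (circT t)
  | .var _ => rfl
  | .abs t => by simp only [brenLT, circT, renLT, circT_brenLT (upr ζ) t]
  | .mabs c => by simp only [brenLT, circT, renLT, circC_brenLC ζ c]
theorem circC_brenLC (ζ : ℕ → ℕ) : ∀ c : BCm, circC (brenLC ζ c) = renLC ζ (circC c)
  | .cut t e => by simp only [brenLC, circC, renLC_fill, circT_brenLT ζ t, circE_brenLE ζ e]
theorem circE_brenLE (ζ : ℕ → ℕ) : ∀ e : BCt, circE (brenLE ζ e) = renLE ζ (circE e)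
  | .cvar _ => rfl
  | .cons t e => by simp only [brenLE, circE, renLE, circT_brenLT ζ t, circE_brenLE ζ e]
  | .tmu c => by
    simp only [brenLE, circE, renLE, renLT, circC_brenLC (upr ζ) c, renMC_renLC]
end

/- `(μ̃x.c)∘` mentions the μ-variable 0 free, so `(·)∘` only commutes with μ-renamings fixing 0
on commands and contexts; on terms every such occurrence is bound by an enclosing `μ`. -/
mutual
theorem circT_brenMT (ξ : ℕ → ℕ) : ∀ t : BTm, circT (brenMT ξ t) = renMT ξ (circT t)
  | .var _ => rfl
  | .abs t => by simp only [brenMT, circT, renMT, circT_brenMT ξ t]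
  | .mabs c => by simp only [brenMT, circT, renMT, circC_brenMC (upr ξ) rfl c]
theorem circC_brenMC (ξ : ℕ → ℕ) (hξ : ξ 0 = 0) : ∀ c : BCm,
    circC (brenMC ξ c) = renMC ξ (circC c)
  | .cut t e => by
    simp only [brenMC, circC, renMC_fill, circT_brenMT ξ t, circE_brenME ξ hξ e]
theorem circE_brenME (ξ : ℕ → ℕ) (hξ : ξ 0 = 0) : ∀ e : BCt,
    circE (brenME ξ e) = renME ξ (circE e)
  | .cvar _ => rfl
  | .cons t e => by simp only [brenME, circE, renME, circT_brenMT ξ t, circE_brenME ξ hξ e]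
  | .tmu c => by
    simp only [brenME, circE, renME, renMT, hξ, circC_brenMC ξ hξ c, renMC_upr_renMC_succ]
end

theorem upsL_upr (σ : ℕ → Tm) (ξ : ℕ → ℕ) :
    (fun k => upsL σ (upr ξ k)) = upsL (fun k => σ (ξ k)) := by
  funext n; cases n <;> rfl

mutual
theorem lsubT_renLT (σ : ℕ → Tm) (ξ : ℕ → ℕ) : ∀ t : Tm,
    lsubT σ (renLT ξ t) = lsubT (fun k => σ (ξ k)) t
  | .var _ => rfl
  | .abs t => by simp only [renLT, lsubT, lsubT_renLT (upsL σ) (upr ξ) t, upsL_upr]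
  | .app t u => by simp only [renLT, lsubT, lsubT_renLT σ ξ t, lsubT_renLT σ ξ u]
  | .mabs c => by simp only [renLT, lsubT, lsubC_renLC _ ξ c]
theorem lsubC_renLC (σ : ℕ → Tm) (ξ : ℕ → ℕ) : ∀ c : Cm,
    lsubC σ (renLC ξ c) = lsubC (fun k => σ (ξ k)) c
  | .cmd _ t => by simp only [renLC, lsubC, lsubT_renLT σ ξ t]
end

mutual
theorem lsubT_eq_self (σ : ℕ → Tm) (hσ : ∀ k, σ k = .var k) : ∀ t : Tm, lsubT σ t = t
  | .var x => hσ x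
  | .abs t => by
    rw [lsubT, lsubT_eq_self (upsL σ) (fun k => by cases k <;> simp [upsL, hσ, renLT]) t]
  | .app t u => by rw [lsubT, lsubT_eq_self σ hσ t, lsubT_eq_self σ hσ u]
  | .mabs c => by rw [lsubT, lsubC_eq_self _ (fun k => by simp [hσ, renMT]) c]
theorem lsubC_eq_self (σ : ℕ → Tm) (hσ : ∀ k, σ k = .var k) : ∀ c : Cm, lsubC σ c = c
  | .cmd _ t => by rw [lsubC, lsubT_eq_self σ hσ t]
end

theorem upsM_upr (σ : ℕ → Ct) (ξ : ℕ → ℕ) :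
    (fun k => upsM σ (upr ξ k)) = upsM (fun k => σ (ξ k)) := by
  funext n; cases n <;> rfl

mutual
theorem msubT_renMT (σ : ℕ → Ct) (ξ : ℕ → ℕ) : ∀ t : Tm,
    msubT σ (renMT ξ t) = msubT (fun k => σ (ξ k)) t
  | .var _ => rfl
  | .abs t => by simp only [renMT, msubT, msubT_renMT _ ξ t]
  | .app t u => by simp only [renMT, msubT, msubT_renMT σ ξ t, msubT_renMT σ ξ u]
  | .mabs c => by simp only [renMT, msubT, msubC_renMC (upsM σ) (upr ξ) c, upsM_upr]
theorem msubC_renMC (σ : ℕ → Ct) (ξ : ℕ → ℕ) : ∀ c : Cm,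
    msubC σ (renMC ξ c) = msubC (fun k => σ (ξ k)) c
  | .cmd _ t => by simp only [renMC, msubC, msubT_renMT σ ξ t]
end

mutual
theorem msubT_eq_self (σ : ℕ → Ct) (hσ : ∀ k, σ k = .cvar k) : ∀ t : Tm, msubT σ t = t
  | .var _ => rfl
  | .abs t => by rw [msubT, msubT_eq_self _ (fun k => by simp [hσ, renLE]) t]
  | .app t u => by rw [msubT, msubT_eq_self σ hσ t, msubT_eq_self σ hσ u]
  | .mabs c => by
    rw [msubT, msubC_eq_self (upsM σ) (fun k => by cases k <;> simp [upsM, hσ, renME]) c]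
theorem msubC_eq_self (σ : ℕ → Ct) (hσ : ∀ k, σ k = .cvar k) : ∀ c : Cm, msubC σ c = c
  | .cmd a t => by rw [msubC, msubT_eq_self σ hσ t, hσ, fill]
end

mutual
theorem cntLT_renLT_eq_zero (x : ℕ) (ξ : ℕ → ℕ) (hξ : ∀ y, ξ y ≠ x) :
    ∀ t : Tm, cntLT x (renLT ξ t) = 0
  | .var y => by simp [renLT, cntLT, hξ y]
  | .abs t => cntLT_renLT_eq_zero (x + 1) (upr ξ) (fun y => by cases y <;> simp [upr, hξ]) t
  | .app t u => by
    simp only [renLT, cntLT, cntLT_renLT_eq_zero x ξ hξ t, cntLT_renLT_eq_zero x ξ hξ u]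
  | .mabs c => cntLC_renLC_eq_zero x ξ hξ c
theorem cntLC_renLC_eq_zero (x : ℕ) (ξ : ℕ → ℕ) (hξ : ∀ y, ξ y ≠ x) :
    ∀ c : Cm, cntLC x (renLC ξ c) = 0
  | .cmd _ t => cntLT_renLT_eq_zero x ξ hξ t
end

theorem star_abs {t t' : Tm} (h : Star LStepT t t') : Star LStepT (.abs t) (.abs t') :=
  Relation.ReflTransGen.lift Tm.abs (fun _ _ => KT.absC) _ _ h

theorem star_appL (u : Tm) {t t' : Tm} (h : Star LStepT t t') :
    Star LStepT (.app t u) (.app t' u) :=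
  Relation.ReflTransGen.lift (fun t => Tm.app t u) (fun _ _ => KT.appL u) _ _ h

theorem star_appR (t : Tm) {u u' : Tm} (h : Star LStepT u u') :
    Star LStepT (.app t u) (.app t u') :=
  Relation.ReflTransGen.lift (Tm.app t) (fun _ _ => KT.appR t) _ _ h

theorem star_mabs {c c' : Cm} (h : Star LStepC c c') : Star LStepT (.mabs c) (.mabs c') :=
  Relation.ReflTransGen.lift Tm.mabs (fun _ _ => KT.mabsC) _ _ h

theorem star_cmd (a : ℕ) {t t' : Tm} (h : Star LStepT t t') :
    Star LStepC (.cmd a t) (.cmd a t') :=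
  Relation.ReflTransGen.lift (Cm.cmd a) (fun _ _ => KC.cmdC a) _ _ h

theorem star_fill : ∀ (e : Ct) {t t' : Tm}, Star LStepT t t' →
    Star LStepC (fill e t) (fill e t')
  | .cvar a, _, _, h => star_cmd a h
  | .push b u, _, _, h => star_cmd b (star_appR u h)
  | .cons e u, _, _, h => star_fill e (star_appL u h)

theorem lstepT_beta_mabs_app_var (b : ℕ) (t u : Tm) :
    LStepT (.app (.abs (.mabs (.cmd b (.app (renLT Nat.succ t) (.var 0))))) u)
      (.mabs (.cmd b (.app t (renMT Nat.succ u)))) := by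
  have hlinear : cntLT 0 (.mabs (.cmd b (.app (renLT Nat.succ t) (.var 0)))) = 1 := by
    simp [cntLT, cntLC, cntLT_renLT_eq_zero 0 Nat.succ Nat.succ_ne_zero]
  have hsubst : lsubT (sub0L u) (.mabs (.cmd b (.app (renLT Nat.succ t) (.var 0))))
      = .mabs (.cmd b (.app t (renMT Nat.succ u))) := by
    simp only [lsubT, lsubC, lsubT_renLT, sub0L]
    rw [lsubT_eq_self _ (fun k => by simp [renMT]) t]
  exact hsubst ▸ KT.root (RootTlin.beta _ _ (Or.inr hlinear))

theorem lstepC_rho_renMT_succ (a b : ℕ) (t : Tm) :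
    LStepC (.cmd a (.mabs (.cmd (b + 1) (renMT Nat.succ t)))) (.cmd b t) := by
  have hsubst : msubC (sub0M (.cvar a)) (.cmd (b + 1) (renMT Nat.succ t)) = .cmd b t := by
    rw [msubC, msubT_renMT, msubT_eq_self (fun k => sub0M (.cvar a) k.succ) fun _ => rfl]; rfl
  exact hsubst ▸ KC.root (RootC.rho a _)

theorem fill_circE_tmu_reduces (b : ℕ) (t : BTm) (u : Tm) :
    Star LStepC (fill (circE (.tmu (.cut (brenLT Nat.succ t) (.cons (.var 0) (.cvar b))))) u)
      (.cmd b (.app (circT t) u)) := by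
  simp only [circE, circC, circT, fill, circT_brenLT, renMC, renMT, renMT_renLT]
  exact .head (KC.cmdC 0 (lstepT_beta_mabs_app_var _ _ u))
    (.single (lstepC_rho_renMT_succ 0 b (.app _ _)))

mutual
theorem circT_dagT_reduces : ∀ t : Tm, Star LStepT (circT (dagT t)) t
  | .var _ => .refl
  | .abs t => star_abs (circT_dagT_reduces t)
  | .mabs c => star_mabs (circC_dagC_reduces c)
  | .app u v => by
    have hθ : LStepT (.mabs (.cmd 0 (.app (renMT Nat.succ (circT (dagT u)))
        (renMT Nat.succ (circT (dagT v)))))) (.app (circT (dagT u)) (circT (dagT v))) :=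
      KT.root (RootTlin.theta (.app _ _))
    have hadmin : Star LStepT (circT (dagT (.app u v)))
        (.mabs (.cmd 0 (.app (circT (brenMT Nat.succ (dagT u)))
          (circT (brenMT Nat.succ (dagT v)))))) :=
      star_mabs (fill_circE_tmu_reduces 0 _ _)
    rw [circT_brenMT, circT_brenMT] at hadmin
    exact (hadmin.tail hθ).trans
      ((star_appL _ (circT_dagT_reduces u)).trans (star_appR _ (circT_dagT_reduces v)))
theorem circC_dagC_reduces : ∀ c : Cm, Star LStepC (circC (dagC c)) c
  | .cmd a t => star_cmd a (circT_dagT_reduces t)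
end

theorem fill_circE_dagE_reduces : ∀ (e : Ct) (u : Tm),
    Star LStepC (fill (circE (dagE e)) u) (fill e u)
  | .cvar _, _ => .refl
  | .push b t, u =>
    (fill_circE_tmu_reduces b (dagT t) u).trans (star_cmd b (star_appL u (circT_dagT_reduces t)))
  | .cons e t, u =>
    (fill_circE_dagE_reduces e _).trans (star_fill e (star_appR u (circT_dagT_reduces t)))

/-- A λμ-context reduces to another one when all its fillings do. -/
theorem dag_circ_composition :
    (∀ t : Tm, Star LStepT (circT (dagT t)) t) ∧
    (∀ c : Cm, Star LStepC (circC (dagC c)) c) ∧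
    (∀ (e : Ct) (u : Tm), Star LStepC (fill (circE (dagE e)) u) (fill e u)) :=
  ⟨circT_dagT_reduces, circC_dagC_reduces, fill_circE_dagE_reduces⟩

end CHSim
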